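/- arXiv:1003.3897 — 6 statements merged into one kernel-verified Lean document; each statement's English description precedes it below -/
import Mathlib

section
/- Let A be a finite dimensional k-algebra, Q a finite dimensional left A-module, B = End_A(Q), and J the two-sided ideal of B consisting of endomorphisms annihilating the socle soc^A(Q). Then for all n ≥ 0, J maps the n-th socle layer into the (n-1)-th: J · soc^A_{-n}(Q) ⊆ soc^A_{-n+1}(Q). -/
/-- The socle series of a module: `socS A Q 0 = ⊥`, and `socS A Q (n+1)` is the preimage in `Q`
of the socle of `Q / socS A Q n`, described lattice-theoretically as the sup of `socS A Q n`
with all submodules covering `socS A Q n` (i.e. those `W` with `W / socS A Q n` simple). -/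
noncomputable def socS (A : Type*) [Ring A] (Q : Type*) [AddCommGroup Q] [Module A Q] :
    ℕ → Submodule A Q
  | 0 => ⊥
  | n + 1 => socS A Q n ⊔ sSup {W : Submodule A Q | socS A Q n ⋖ W}

lemma socS_le_succ (A : Type*) [Ring A] (Q : Type*) [AddCommGroup Q] [Module A Q] (n : ℕ) :
    socS A Q n ≤ socS A Q (n + 1) := by
  show socS A Q n ≤ socS A Q n ⊔ _
  exact le_sup_left

/-- Key lemma: a module map shifts the socle series by at most the same amount. -/
lemma socS_map_succ {A M N : Type*} [Ring A] [AddCommGroup M] [Module A M]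
    [AddCommGroup N] [Module A N] (f : M →ₗ[A] N) {m n : ℕ}
    (h : (socS A M m).map f ≤ socS A N n) :
    (socS A M (m + 1)).map f ≤ socS A N (n + 1) := by
  show ((socS A M m ⊔ sSup {W : Submodule A M | socS A M m ⋖ W}).map f) ≤ _
  rw [Submodule.map_sup]
  refine sup_le (h.trans (socS_le_succ A N n)) ?_
  rw [sSup_eq_iSup', Submodule.map_iSup]
  refine iSup_le ?_
  rintro ⟨W, hW⟩
  simp only
  by_cases hWT : W.map f ≤ socS A N n
  · exact hWT.trans (socS_le_succ A N n)
  · -- show `socS A N n ⋖ socS A N n ⊔ W.map f`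
    set T := socS A N n with hT
    set C := T ⊔ W.map f with hC
    have hTC : T ⋖ C := by
      constructor
      · refine lt_of_le_of_ne le_sup_left ?_
        intro hEq
        exact hWT (le_sup_right.trans hEq.ge)
      · intro X hTX hXC
        -- the intermediate submodule
        have hS : socS A M m ≤ X.comap f ⊓ W := by
          refine le_inf ?_ hW.1.le
          rw [← Submodule.map_le_iff_le_comap]
          exact h.trans hTX.le
        rcases hW.eq_or_eq hS inf_le_right with hY | hY
        · -- comap f X ⊓ W = socS A M m : show X ≤ T, contradiction
          have hXT : X ≤ T := by
            intro x hx
            have hxC : x ∈ C := hXC.le hx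
            rw [hC, Submodule.mem_sup] at hxC
            obtain ⟨t, ht, y, hy, rfl⟩ := hxC
            obtain ⟨w, hw, rfl⟩ := hy
            have hfwX : f w ∈ X := by
              have : f w = (t + f w) - t := by abel
              rw [this]
              exact X.sub_mem hx (hTX.le ht)
            have hwS : w ∈ socS A M m := by
              rw [← hY]; exact ⟨hfwX, hw⟩
            have : f w ∈ T := h ⟨w, hwS, rfl⟩
            exact T.add_mem ht this
          exact absurd (hXT.trans_lt hTX) (lt_irrefl X)
        · -- comap f X ⊓ W = W : show C ≤ X, contradiction
          have hWX : W.map f ≤ X := by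
            rw [Submodule.map_le_iff_le_comap]
            exact hY.ge.trans inf_le_left
          exact absurd (sup_le hTX.le hWX) (not_le_of_gt hXC)
    calc W.map f ≤ C := le_sup_right
      _ ≤ sSup {W : Submodule A N | socS A N n ⋖ W} := le_sSup hTC
      _ ≤ socS A N (n + 1) := by
        show _ ≤ socS A N n ⊔ _
        exact le_sup_right
  -- note: `C` contains `W.map f`
  -- handled above

/-- if `b ∈ End_A(Q)` kills `soc^A Q = socS A Q 1`, then `b` maps the `n`-th socle
layer into the `(n-1)`-th:  `J · soc^A_{-n}(Q) ⊆ soc^A_{-n+1}(Q)`. -/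
theorem socle_series_shift (k : Type*) [Field k] (A : Type*) [Ring A] [Algebra k A]
    [FiniteDimensional k A] (Q : Type*) [AddCommGroup Q] [Module A Q]
    [Module k Q] [IsScalarTower k A Q] [FiniteDimensional k Q]
    (b : Module.End A Q) (hb : ∀ x ∈ socS A Q 1, b x = 0) :
    ∀ n : ℕ, ∀ x ∈ socS A Q (n + 1), b x ∈ socS A Q n := by
  have key : ∀ n : ℕ, (socS A Q (n + 1)).map b ≤ socS A Q n := by
    intro n
    induction n with
    | zero =>
      rintro _ ⟨x, hx, rfl⟩
      simp [hb x hx, socS]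
    | succ n ih => exact socS_map_succ b ih
  intro n x hx
  exact key n ⟨x, hx, rfl⟩
end

section
/- Let A be a finite dimensional k-algebra and Q a finite dimensional A-module with both irreducible head and irreducible socle. Then J = J' = rad B where B = End_A(Q), and for all n ≥ 0: (rad B)·rad_A^n Q ⊆ rad_A^{n+1}Q and (rad B)·soc^A_{-n}Q ⊆ soc^A_{-n+1}Q. -/
/-- The radical series of a module (see statement 1). -/
noncomputable def radS (A : Type*) [Ring A] (Q : Type*) [AddCommGroup Q] [Module A Q] :
    ℕ → Submodule A Q
  | 0 => ⊤
  | n + 1 => Submodule.span A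
      {y : Q | ∃ a ∈ Ideal.jacobson (⊥ : Ideal A), ∃ x ∈ radS A Q n, y = a • x}

/-!
As `Q` is artinian with simple socle, every nonzero submodule contains `socS A Q 1`; as injective
endomorphisms of an artinian module are bijective, the non-units of `End_A Q` are exactly the
endomorphisms killing the socle. Dually they are exactly those with image in `radS A Q 1`. So the
non-units form an ideal, necessarily the Jacobson radical. An endomorphism sending `socS (n + 1)`
into `socS n` maps each cover of `socS (n + 1)` to at most a cover of `socS n`, hence sends
`socS (n + 2)` into `socS (n + 1)`.
-/

open Submodule LinearMap

theorem Ideal.jacobson_bot_eq_of_mem_iff_not_isUnit {R : Type*} [Ring R] {I : Ideal R}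
    (hI : ∀ x, x ∈ I ↔ ¬IsUnit x) : Ideal.jacobson (⊥ : Ideal R) = I := by
  have hI_ne_top : I ≠ ⊤ := fun h => (hI 1).mp (h ▸ Submodule.mem_top) isUnit_one
  have hI_max : I.IsMaximal := Ideal.isMaximal_iff.mpr
    ⟨fun h => (hI 1).mp h isUnit_one, fun J x _ hx hxJ =>
      (J.eq_top_of_isUnit_mem hxJ (of_not_not fun hu => hx ((hI x).mpr hu))).symm ▸ mem_top⟩
  have hle : ∀ M : Ideal R, M.IsMaximal → M ≤ I := fun M hM x hx =>
    (hI x).mpr fun hu => hM.ne_top (M.eq_top_of_isUnit_mem hx hu)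
  refine le_antisymm (sInf_le ⟨bot_le, hI_max⟩) (le_sInf fun M ⟨_, hM⟩ => ?_)
  exact (hM.eq_of_le hI_ne_top (hle M hM)).ge

namespace Submodule

variable {R M : Type*} [Ring R] [AddCommGroup M] [Module R M]

def vanishingIdeal (S : Submodule R M) : Ideal (Module.End R M) where
  carrier := {f | S ≤ ker f}
  add_mem' hf hg x hx := by simp [mem_ker.mp (hf hx), mem_ker.mp (hg hx)]
  zero_mem' x _ := rfl
  smul_mem' c f hf x hx := by simp [mem_ker.mp (hf hx)]

theorem mem_vanishingIdeal {S : Submodule R M} {f : Module.End R M} :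
    f ∈ S.vanishingIdeal ↔ S ≤ ker f := Iff.rfl

end Submodule

namespace Module.End

variable {R M : Type*} [Ring R] [AddCommGroup M] [Module R M]

theorem not_isUnit_iff_le_ker [IsArtinian R M] {S : Submodule R M} (hS : S ≠ ⊥)
    (hS_le : ∀ N : Submodule R M, N ≠ ⊥ → S ≤ N) (f : Module.End R M) :
    ¬IsUnit f ↔ S ≤ ker f := by
  have : IsUnit f ↔ ker f = ⊥ := by
    rw [isUnit_iff, ker_eq_bot]
    exact ⟨fun h => h.1, IsArtinian.bijective_of_injective_endomorphism f⟩
  rw [this]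
  exact ⟨hS_le _, fun h hf => hS (le_bot_iff.mp (hf ▸ h))⟩

theorem not_isUnit_iff_range_le [IsNoetherian R M] {T : Submodule R M} (hT : T ≠ ⊤)
    (hT_ge : ∀ N : Submodule R M, N ≠ ⊤ → N ≤ T) (f : Module.End R M) :
    ¬IsUnit f ↔ range f ≤ T := by
  have : IsUnit f ↔ range f = ⊤ := by
    rw [isUnit_iff, range_eq_top]
    exact ⟨fun h => h.2, IsNoetherian.bijective_of_surjective_endomorphism f⟩
  rw [this]
  exact ⟨hT_ge _, fun h hf => hT (top_le_iff.mp (hf ▸ h))⟩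

theorem jacobson_bot_eq_vanishingIdeal [IsArtinian R M] {S : Submodule R M} (hS : S ≠ ⊥)
    (hS_le : ∀ N : Submodule R M, N ≠ ⊥ → S ≤ N) :
    Ideal.jacobson (⊥ : Ideal (Module.End R M)) = S.vanishingIdeal :=
  Ideal.jacobson_bot_eq_of_mem_iff_not_isUnit fun f => (not_isUnit_iff_le_ker hS hS_le f).symm

end Module.End

theorem Submodule.wcovBy_sup_map {R M N : Type*} [Ring R] [AddCommGroup M] [Module R M]
    [AddCommGroup N] [Module R N] {c : M →ₗ[R] N} {p : Submodule R N} {q W : Submodule R M}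
    (hq : q.map c ≤ p) (hqW : q ⋖ W) : p ⩿ W.map c ⊔ p := by
  refine ⟨le_sup_right, fun V hpV hVlt => ?_⟩
  have hqV : q ≤ V.comap c ⊓ W := le_inf (map_le_iff_le_comap.mp (hq.trans hpV.le)) hqW.le
  rcases hqW.eq_or_eq hqV inf_le_right with hq_eq | hW_eq
  · refine hpV.not_ge fun x hx => ?_
    obtain ⟨_, ⟨w, hw, rfl⟩, z, hz, rfl⟩ := mem_sup.mp (hVlt.le hx)
    have hwV : c w ∈ V := by simpa using V.sub_mem hx (hpV.le hz)
    have hwq : w ∈ q := hq_eq ▸ ⟨hwV, hw⟩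
    exact p.add_mem (hq (mem_map_of_mem hwq)) hz
  · exact hVlt.not_ge (sup_le (map_le_iff_le_comap.mpr (hW_eq ▸ inf_le_left)) hpV.le)

section Series

variable {A : Type*} [Ring A] {Q : Type*} [AddCommGroup Q] [Module A Q]

theorem socS_succ (n : ℕ) :
    socS A Q (n + 1) = socS A Q n ⊔ sSup {W : Submodule A Q | socS A Q n ⋖ W} := rfl

theorem socS_le_socS_succ (n : ℕ) : socS A Q n ≤ socS A Q (n + 1) := le_sup_left

theorem le_socS_one_of_isAtom {S : Submodule A Q} (hS : IsAtom S) : S ≤ socS A Q 1 :=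
  le_sup_of_le_right (le_sSup hS.bot_covBy)

theorem socS_one_le_of_ne_bot [IsArtinian A Q] (hsoc : IsAtom (socS A Q 1))
    {N : Submodule A Q} (hN : N ≠ ⊥) : socS A Q 1 ≤ N := by
  obtain ⟨S, hS, hSN⟩ := (eq_bot_or_exists_atom_le N).resolve_left hN
  exact ((hsoc.le_iff_eq hS.1).mp (le_socS_one_of_isAtom hS)) ▸ hSN

theorem map_socS_succ_le {c : Module.End A Q} (hc : socS A Q 1 ≤ ker c) (n : ℕ) :
    (socS A Q (n + 1)).map c ≤ socS A Q n := by
  induction n with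
  | zero => exact le_ker_iff_map.mp hc |>.le
  | succ n ih =>
    rw [socS_succ (n + 1), map_le_iff_le_comap]
    refine sup_le ?_ (sSup_le fun W hW => ?_)
    · exact map_le_iff_le_comap.mp (ih.trans (socS_le_socS_succ n))
    · rw [← map_le_iff_le_comap]
      rcases (wcovBy_sup_map ih hW).eq_or_covBy with h | h
      · exact le_sup_of_le_left (h ▸ le_sup_left)
      · exact le_sup_of_le_right (le_sup_left.trans (le_sSup h))

theorem radS_succ (n : ℕ) : radS A Q (n + 1) = Ideal.jacobson (⊥ : Ideal A) • radS A Q n := by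
  refine le_antisymm (span_le.mpr ?_)
    (smul_le.mpr fun a ha x hx => subset_span ⟨a, ha, x, hx, rfl⟩)
  rintro _ ⟨a, ha, x, hx, rfl⟩
  exact smul_mem_smul ha hx

theorem radS_one_le_of_isCoatom {m : Submodule A Q} (hm : IsCoatom m) : radS A Q 1 ≤ m := by
  rw [radS_succ, Ideal.jacobson_bot]
  exact (Ring.jacobson_smul_top_le A Q).trans (sInf_le hm)

theorem le_radS_one_of_ne_top [IsNoetherian A Q] (hhead : IsCoatom (radS A Q 1))
    {N : Submodule A Q} (hN : N ≠ ⊤) : N ≤ radS A Q 1 := by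
  obtain ⟨m, hm, hNm⟩ := (eq_top_or_exists_le_coatom N).resolve_left hN
  exact ((hhead.le_iff_eq hm.1).mp (radS_one_le_of_isCoatom hm)) ▸ hNm

theorem map_radS_le {c : Module.End A Q} (hc : range c ≤ radS A Q 1) (n : ℕ) :
    (radS A Q n).map c ≤ radS A Q (n + 1) := by
  induction n with
  | zero => exact (map_top c).trans_le hc
  | succ n ih =>
    rw [radS_succ, radS_succ (n + 1), map_smul'']
    exact smul_mono_right _ ih

end Series

theorem J_eq_J'_eq_radB_general (k : Type*) [Field k] (A : Type*) [Ring A] [Algebra k A]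
    (Q : Type*) [AddCommGroup Q] [Module A Q]
    [Module k Q] [IsScalarTower k A Q] [FiniteDimensional k Q]
    (hhead : IsSimpleModule A (Q ⧸ radS A Q 1))
    (hsoc : IsSimpleModule A ↥(socS A Q 1)) :
    (∀ b : Module.End A Q,
      ((∀ x ∈ socS A Q 1, b x = 0) ↔ b ∈ Ideal.jacobson (⊥ : Ideal (Module.End A Q)))) ∧
    (∀ b : Module.End A Q,
      ((∀ q : Q, b q ∈ radS A Q 1) ↔ b ∈ Ideal.jacobson (⊥ : Ideal (Module.End A Q)))) ∧
    (∀ b ∈ Ideal.jacobson (⊥ : Ideal (Module.End A Q)), ∀ n : ℕ,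
      (∀ x ∈ radS A Q n, b x ∈ radS A Q (n + 1)) ∧
      (∀ x ∈ socS A Q (n + 1), b x ∈ socS A Q n)) := by
  have : IsArtinian A Q := isArtinian_of_tower k inferInstance
  have : IsNoetherian A Q := isNoetherian_of_tower k inferInstance
  have hsoc_atom := isSimpleModule_iff_isAtom.mp hsoc
  have hhead_coatom := isSimpleModule_iff_isCoatom.mp hhead
  have hsoc_le := fun (N : Submodule A Q) => socS_one_le_of_ne_bot (N := N) hsoc_atom
  have hJ (b : Module.End A Q) : b ∈ Ideal.jacobson ⊥ ↔ socS A Q 1 ≤ ker b := by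
    rw [Module.End.jacobson_bot_eq_vanishingIdeal hsoc_atom.1 hsoc_le, mem_vanishingIdeal]
  have hJ' (b : Module.End A Q) : b ∈ Ideal.jacobson ⊥ ↔ range b ≤ radS A Q 1 := by
    rw [hJ, ← Module.End.not_isUnit_iff_le_ker hsoc_atom.1 hsoc_le,
      Module.End.not_isUnit_iff_range_le hhead_coatom.1 fun N => le_radS_one_of_ne_top hhead_coatom]
  refine ⟨fun b => (hJ b).symm, fun b => ?_, fun b hb n => ⟨fun x hx => ?_, fun x hx => ?_⟩⟩
  · rw [hJ', range_le_iff_comap, eq_top_iff]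
    exact ⟨fun h q _ => h q, fun h q => h trivial⟩
  · exact map_radS_le ((hJ' b).mp hb) n (mem_map_of_mem hx)
  · exact map_socS_succ_le ((hJ b).mp hb) n (mem_map_of_mem hx)

/-- if `Q` has irreducible head and irreducible socle then
`J = J' = rad B` where `B = End_A(Q)`, and `rad B` shifts both the radical and socle series. -/
theorem J_eq_J'_eq_radB (k : Type*) [Field k] (A : Type*) [Ring A] [Algebra k A]
    [FiniteDimensional k A] (Q : Type*) [AddCommGroup Q] [Module A Q]
    [Module k Q] [IsScalarTower k A Q] [FiniteDimensional k Q]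
    (hhead : IsSimpleModule A (Q ⧸ radS A Q 1))
    (hsoc : IsSimpleModule A ↥(socS A Q 1)) :
    (∀ b : Module.End A Q,
      ((∀ x ∈ socS A Q 1, b x = 0) ↔ b ∈ Ideal.jacobson (⊥ : Ideal (Module.End A Q)))) ∧
    (∀ b : Module.End A Q,
      ((∀ q : Q, b q ∈ radS A Q 1) ↔ b ∈ Ideal.jacobson (⊥ : Ideal (Module.End A Q)))) ∧
    (∀ b ∈ Ideal.jacobson (⊥ : Ideal (Module.End A Q)), ∀ n : ℕ,
      (∀ x ∈ radS A Q n, b x ∈ radS A Q (n + 1)) ∧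
      (∀ x ∈ socS A Q (n + 1), b x ∈ socS A Q n)) :=
  J_eq_J'_eq_radB_general k A Q hhead hsoc
end

section
/- Let N be a normal subgroup of a group G and Q a finite dimensional kN-module. If Q is G-stable via some structure map α : G → GL_k(Q) satisfying α(g)ρ(n) = ρ(gng⁻¹)α(g) and α(1) = 1, then there exists a structure map α' : G → GL_k(Q) additionally satisfying α'(gn) = α'(g)ρ(n) for all g ∈ G, n ∈ N. -/
/-! Fix a left transversal `S` of `N` containing `1`, so that every `g` factors uniquely as
`g = s * m` with `s ∈ S`, `m ∈ N`, and put `α' g = α s * ρ m`. Right multiplication by `n ∈ N`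
only changes `m` to `m * n`, which gives `α' (g * n) = α' g * ρ n`; `α' 1 = α 1 = 1`; and
`α s * ρ m` still intertwines `ρ` with its twist by `s * m = g`, since `ρ m` intertwines `ρ`
with its twist by `m`. -/

namespace Subgroup

variable {G M : Type*} [Group G] [Monoid M] {N : Subgroup G}

def Intertwines (hN : N.Normal) (ρ : N →* M) (g : G) (a : M) : Prop :=
  ∀ n : N, a * ρ n = ρ ⟨g * n * g⁻¹, hN.conj_mem n n.2 g⟩ * a

theorem Intertwines.mul_map {hN : N.Normal} {ρ : N →* M} {g : G} {a : M}
    (h : Intertwines hN ρ g a) (m : N) : Intertwines hN ρ (g * m) (a * ρ m) := by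
  intro n
  have hconj : (⟨g * ↑(m * n * m⁻¹) * g⁻¹, hN.conj_mem _ (m * n * m⁻¹).2 g⟩ : N)
      = ⟨g * m * n * (g * m)⁻¹, hN.conj_mem n n.2 (g * m)⟩ := by
    ext
    simp only [coe_mul, coe_inv]
    group
  calc a * ρ m * ρ n = a * ρ (m * n * m⁻¹) * ρ m := by
        rw [mul_assoc, mul_assoc, ← map_mul, ← map_mul, inv_mul_cancel_right]
    _ = ρ ⟨g * m * n * (g * m)⁻¹, _⟩ * (a * ρ m) := by
        rw [h, hconj, mul_assoc]

theorem exists_intertwines_map_mul (hN : N.Normal) (ρ : N →* M) (α : G → M) (hα1 : α 1 = 1)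
    (hα : ∀ g, Intertwines hN ρ g (α g)) :
    ∃ α' : G → M, α' 1 = 1 ∧ (∀ g, Intertwines hN ρ g (α' g)) ∧
      ∀ (g : G) (n : N), α' (g * n) = α' g * ρ n := by
  obtain ⟨S, hS, hS1⟩ := N.exists_isComplement_left 1
  refine ⟨fun g => α (hS.equiv g).1 * ρ (hS.equiv g).2, ?_, fun g => ?_, fun g n => ?_⟩
  · simp only [hS.equiv_one hS1 N.one_mem, hα1, one_mul]
    exact map_one ρ
  · simpa only [hS.equiv_fst_mul_equiv_snd] using (hα (hS.equiv g).1).mul_map (hS.equiv g).2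
  · simp only [hS.equiv_mul_right, map_mul, mul_assoc]

end Subgroup

theorem exists_compatible_structure_map_general
    {k : Type*} [Field k] {G : Type*} [Group G]
    {Q : Type*} [AddCommGroup Q] [Module k Q]
    (N : Subgroup G) (hN : N.Normal)
    (ρ : ↥N →* (Q →ₗ[k] Q)ˣ)
    (α : G → (Q →ₗ[k] Q)ˣ)
    (hα1 : α 1 = 1)
    (hconj : ∀ (g : G) (n : ↥N),
      α g * ρ n = ρ ⟨g * ↑n * g⁻¹, hN.conj_mem ↑n n.2 g⟩ * α g) :
    ∃ α' : G → (Q →ₗ[k] Q)ˣ,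
      α' 1 = 1 ∧
      (∀ (g : G) (n : ↥N),
        α' g * ρ n = ρ ⟨g * ↑n * g⁻¹, hN.conj_mem ↑n n.2 g⟩ * α' g) ∧
      (∀ (g : G) (n : ↥N), α' (g * ↑n) = α' g * ρ n) :=
  N.exists_intertwines_map_mul hN ρ α hα1 hconj

/-- if a `kN`-module `Q` is `G`-stable via a structure map `α` (satisfying
`α(g)ρ(n) = ρ(gng⁻¹)α(g)` and `α(1) = 1`), then there is a structure map `α'` additionally
satisfying `α'(gn) = α'(g)ρ(n)`. -/
theorem exists_compatible_structure_map
    {k : Type*} [Field k] {G : Type*} [Group G]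
    {Q : Type*} [AddCommGroup Q] [Module k Q] [FiniteDimensional k Q]
    (N : Subgroup G) (hN : N.Normal)
    (ρ : ↥N →* (Q →ₗ[k] Q)ˣ)
    (α : G → (Q →ₗ[k] Q)ˣ)
    (hα1 : α 1 = 1)
    (hconj : ∀ (g : G) (n : ↥N),
      α g * ρ n = ρ ⟨g * ↑n * g⁻¹, hN.conj_mem ↑n n.2 g⟩ * α g) :
    ∃ α' : G → (Q →ₗ[k] Q)ˣ,
      α' 1 = 1 ∧
      (∀ (g : G) (n : ↥N),
        α' g * ρ n = ρ ⟨g * ↑n * g⁻¹, hN.conj_mem ↑n n.2 g⟩ * α' g) ∧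
      (∀ (g : G) (n : ↥N), α' (g * ↑n) = α' g * ρ n) :=
  exists_compatible_structure_map_general N hN ρ α hα1 hconj
end

section
/- Suppose (Q,V) is a tensor G-stable pair: V is a kG-submodule of the kN-module Q, and there is a nonzero finite dimensional k[G/N]-module Y such that Q ⊗ Y is a kG-module extending the N-action, with V ⊗ Y a G-submodule. Then (Q,V) is numerically G-stable: there is a kG-module M = Q ⊕ R with R ≅ Q^{⊕(n-1)} as kN-modules (n = dim(Y ⊗ Y*)) and V is a G-submodule of M contained in the summand Q. -/
/-!
`G` acts on `Hom_k(Y, Q ⊗ Y) ≅ (Q ⊗ Y) ⊗ Y*` by `F ↦ τ(g) ∘ F ∘ σ(g)⁻¹`. As `N` acts trivially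
on `Y`, an element `n ∈ N` acts by post-composition with `ρ(n) ⊗ 1`, so a basis of `End_k(Y)`
starting with the identity identifies `Hom_k(Y, Q ⊗ Y) ≅ Q ⊗ End_k(Y)` with `Q^{⊕ (dim Y)²}`
compatibly with `N`, the identity coordinate being the first summand. The embedding
`v ↦ (y ↦ v ⊗ y)` lands in that summand, and it is `G`-equivariant on `V` because
`τ(g)(v ⊗ y) = β(g)v ⊗ σ(g)y`.
-/

open Module TensorProduct

theorem exists_basis_fin_succ_zero_eq {K X : Type*} [DivisionRing K] [AddCommGroup X]
    [Module K X] [FiniteDimensional K X] {n : ℕ} (hn : finrank K X = n + 1) {x : X}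
    (hx : x ≠ 0) : ∃ b : Basis (Fin (n + 1)) K X, b 0 = x := by
  obtain ⟨C, hC⟩ := (K ∙ x).exists_isCompl
  have hCn : finrank K C = n := by
    have := Submodule.finrank_add_eq_of_isCompl hC
    rw [finrank_span_singleton hx] at this
    omega
  refine ⟨Basis.mkFinCons x (finBasisOfFinrankEq K C hCn) (fun c y hy hcy => ?_)
    (fun z => ?_), by simp⟩
  · have hcx : c • x ∈ (K ∙ x) ⊓ C := ⟨Submodule.smul_mem _ c (Submodule.mem_span_singleton_self x),
      by rw [eq_neg_of_add_eq_zero_left hcy]; exact C.neg_mem hy⟩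
    rw [hC.inf_eq_bot, Submodule.mem_bot, smul_eq_zero] at hcx
    exact hcx.resolve_right hx
  · obtain ⟨a, ha, y, hy, rfl⟩ := Submodule.mem_sup.1 (hC.sup_eq_top ▸ Submodule.mem_top (x := z))
    obtain ⟨c, rfl⟩ := Submodule.mem_span_singleton.1 ha
    exact ⟨-c, by simpa [add_comm, add_assoc] using hy⟩

section TensorHom

variable {R P M N : Type*} [CommSemiring R] [AddCommMonoid P] [Module R P]
  [AddCommMonoid M] [Module R M] [AddCommMonoid N] [Module R N]

theorem lTensorHomEquivHomLTensor_rTensor [Projective R M] [Module.Finite R M]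
    (A : P →ₗ[R] P) (x : P ⊗[R] (M →ₗ[R] N)) :
    lTensorHomEquivHomLTensor R M P N (A.rTensor _ x) =
      A.rTensor N ∘ₗ lTensorHomEquivHomLTensor R M P N x := by
  induction x using TensorProduct.induction_on with
  | zero => ext; simp
  | tmul p f => ext; simp
  | add x y hx hy => rw [map_add, map_add, hx, hy, map_add, LinearMap.comp_add]

theorem piScalarRight_rTensor {ι : Type*} [Fintype ι] [DecidableEq ι] (A : P →ₗ[R] P)
    (x : P ⊗[R] (ι → R)) :
    piScalarRight R R P ι (A.rTensor _ x) = fun i => A (piScalarRight R R P ι x i) := by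
  induction x using TensorProduct.induction_on with
  | zero => ext; simp
  | tmul p f => ext; simp
  | add x y hx hy => ext; simp_all

variable [Projective R M] [Module.Finite R M] {ι : Type*} [Fintype ι] [DecidableEq ι]
  (b : Basis ι R (Module.End R M))

noncomputable def homTensorEquivPi : (M →ₗ[R] P ⊗[R] M) ≃ₗ[R] (ι → P) :=
  (lTensorHomEquivHomLTensor R M P M).symm ≪≫ₗ b.equivFun.lTensor P ≪≫ₗ
    piScalarRight R R P ι

theorem homTensorEquivPi_rTensor_comp (A : P →ₗ[R] P) (F : M →ₗ[R] P ⊗[R] M) :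
    homTensorEquivPi b (A.rTensor M ∘ₗ F) = fun i => A (homTensorEquivPi b F i) := by
  obtain ⟨x, rfl⟩ := (lTensorHomEquivHomLTensor R M P M).surjective F
  rw [← lTensorHomEquivHomLTensor_rTensor]
  simp only [homTensorEquivPi, LinearEquiv.trans_apply, LinearEquiv.symm_apply_apply]
  rw [← piScalarRight_rTensor]
  exact congrArg _ (LinearMap.congr_fun
    ((LinearMap.lTensor_comp_rTensor (f := A) (g := b.equivFun.toLinearMap)).trans
      (LinearMap.rTensor_comp_lTensor (f := A) (g := b.equivFun.toLinearMap)).symm) x)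

theorem homTensorEquivPi_mk {i₀ : ι} (hb : b i₀ = 1) (p : P) :
    homTensorEquivPi b (TensorProduct.mk R P M p) = Pi.single i₀ p := by
  have hmk : TensorProduct.mk R P M p = lTensorHomEquivHomLTensor R M P M (p ⊗ₜ b i₀) := by
    ext y; simp [hb]
  ext i
  simp only [hmk, homTensorEquivPi, LinearEquiv.trans_apply, LinearEquiv.symm_apply_apply,
    LinearEquiv.lTensor_tmul, Basis.equivFun_self, piScalarRight_apply, piScalarRightHom_tmul,
    ite_smul, one_smul, zero_smul, Pi.single_apply, eq_comm]

end TensorHom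

theorem exists_homTensorEquiv_prod {k Q Y : Type*} [Field k] [AddCommGroup Q] [Module k Q]
    [AddCommGroup Y] [Module k Y] [FiniteDimensional k Y] [Nontrivial Y] :
    ∃ Φ : (Y →ₗ[k] Q ⊗[k] Y) ≃ₗ[k] Q × (Fin (finrank k Y * finrank k Y - 1) → Q),
      (∀ (A : Q →ₗ[k] Q) (F : Y →ₗ[k] Q ⊗[k] Y),
        Φ (A.rTensor Y ∘ₗ F) = (A (Φ F).1, fun i => A ((Φ F).2 i))) ∧
      ∀ q : Q, Φ (TensorProduct.mk k Q Y q) = (q, 0) := by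
  have hdim : finrank k (Module.End k Y) = (finrank k Y * finrank k Y - 1) + 1 := by
    have := Nat.mul_pos (finrank_pos (R := k) (M := Y)) (finrank_pos (R := k) (M := Y))
    rw [Module.finrank_linearMap]
    omega
  obtain ⟨b, hb⟩ := exists_basis_fin_succ_zero_eq hdim one_ne_zero
  refine ⟨homTensorEquivPi b ≪≫ₗ (Fin.consLinearEquiv k fun _ => Q).symm,
    fun A F => ?_, fun q => ?_⟩
  · simp [homTensorEquivPi_rTensor_comp]; rfl
  · ext i <;> simp [homTensorEquivPi_mk b hb, Fin.tail]

namespace Representation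

variable {k G Q Y : Type*} [CommSemiring k] [Group G] [AddCommMonoid Q] [Module k Q]
  [AddCommMonoid Y] [Module k Y] (ρY : Representation k G Y)
  (ρ : Representation k G (Q ⊗[k] Y))

theorem linHom_apply_eq_rTensor_comp {g : G} (hY : ρY g = 1) {A : Q →ₗ[k] Q}
    (hA : ∀ q y, ρ g (q ⊗ₜ y) = A q ⊗ₜ y) (F : Y →ₗ[k] Q ⊗[k] Y) :
    linHom ρY ρ g F = A.rTensor Y ∘ₗ F := by
  have hρ : ρ g = A.rTensor Y := TensorProduct.ext' hA
  have hY' : ρY g⁻¹ = 1 := by simpa [hY] using (map_mul ρY g⁻¹ g).symm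
  ext y
  simp [linHom_apply, hρ, hY']

theorem linHom_apply_mk {g : G} {q q' : Q} (h : ∀ y, ρ g (q ⊗ₜ y) = q' ⊗ₜ ρY g y) :
    linHom ρY ρ g (TensorProduct.mk k Q Y q) = TensorProduct.mk k Q Y q' := by
  ext y
  simp [linHom_apply, h]

end Representation

theorem tensor_stable_pair_numerically_stable_general
    {k : Type*} [Field k] {G : Type*} [Group G]
    {Q : Type*} [AddCommGroup Q] [Module k Q]
    (N : Subgroup G) [N.Normal]
    (ρ : ↥N →* (Q →ₗ[k] Q)ˣ)
    (V : Submodule k Q)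
    (β : G →* (↥V →ₗ[k] ↥V)ˣ)
    (Y : Type*) [AddCommGroup Y] [Module k Y] [FiniteDimensional k Y] [Nontrivial Y]
    (σ : (G ⧸ N) →* (Y →ₗ[k] Y)ˣ)
    (τ : G →* ((Q ⊗[k] Y) →ₗ[k] (Q ⊗[k] Y))ˣ)
    (hτN : ∀ (n : ↥N) (q : Q) (y : Y), (τ ↑n).1 (q ⊗ₜ[k] y) = ((ρ n).1 q) ⊗ₜ[k] y)
    (hτV : ∀ (g : G) (v : ↥V) (y : Y),
      (τ g).1 ((v : Q) ⊗ₜ[k] y) = (((β g).1 v : Q)) ⊗ₜ[k] ((σ (g : G ⧸ N)).1 y)) :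
    ∃ π : G →* ((Q × (Fin (Module.finrank k Y * Module.finrank k Y - 1) → Q)) →ₗ[k]
        (Q × (Fin (Module.finrank k Y * Module.finrank k Y - 1) → Q)))ˣ,
      (∀ (n : ↥N) (p : Q × (Fin (Module.finrank k Y * Module.finrank k Y - 1) → Q)),
        (π ↑n).1 p = ((ρ n).1 p.1, fun i => (ρ n).1 (p.2 i))) ∧
      (∀ (g : G) (v : ↥V), (π g).1 ((v : Q), 0) = (((β g).1 v : Q), 0)) := by
  obtain ⟨Φ, hΦnat, hΦmk⟩ := exists_homTensorEquiv_prod (k := k) (Q := Q) (Y := Y)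
  let ρY : Representation k G Y := (Units.coeHom _).comp (σ.comp (QuotientGroup.mk' N))
  let ρT : Representation k G (Q ⊗[k] Y) := (Units.coeHom _).comp τ
  refine ⟨Representation.asGroupHom ((Φ.conjAlgEquiv k).toMonoidHom.comp (ρY.linHom ρT)),
    fun n p => ?_, fun g v => ?_⟩
  · have hσn : ρY n = 1 := by simp [ρY, (QuotientGroup.eq_one_iff _).2 n.2]
    have hn := ρY.linHom_apply_eq_rTensor_comp ρT hσn (hτN n)
    simp [Representation.asGroupHom_apply, hn, hΦnat]
  · have hg := ρY.linHom_apply_mk ρT (hτV g v)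
    have hv : Φ.symm ((v : Q), 0) = TensorProduct.mk k Q Y v := Φ.symm_apply_eq.2 (hΦmk v).symm
    simp [Representation.asGroupHom_apply, hv, hg, hΦmk]

/-- if the pair `(Q,V)` is tensor `G`-stable by a nonzero finite dimensional
`k[G/N]`-module `Y` (so `Q ⊗ Y` is a `kG`-module extending the `N`-action, with `V ⊗ Y` a
`G`-submodule carrying the tensor-product `G`-structure), then `(Q,V)` is numerically
`G`-stable: with `n = dim(Y ⊗ Y*) = (dim Y)²` there is a `kG`-module `M = Q ⊕ Q^{⊕(n-1)}`
whose restriction to `N` is the diagonal one, and in which the copy `V × 0` of `V` inside the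
first summand `Q` is a `G`-submodule with its given `G`-structure. -/
theorem tensor_stable_pair_numerically_stable
    {k : Type*} [Field k] {G : Type*} [Group G]
    {Q : Type*} [AddCommGroup Q] [Module k Q] [FiniteDimensional k Q]
    (N : Subgroup G) [N.Normal]
    (ρ : ↥N →* (Q →ₗ[k] Q)ˣ)
    (V : Submodule k Q)
    (hVN : ∀ n : ↥N, ∀ v ∈ V, (ρ n).1 v ∈ V)
    (β : G →* (↥V →ₗ[k] ↥V)ˣ)
    (hβN : ∀ (n : ↥N) (v : ↥V), ((β ↑n).1 v : Q) = (ρ n).1 ↑v)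
    (Y : Type*) [AddCommGroup Y] [Module k Y] [FiniteDimensional k Y] [Nontrivial Y]
    (σ : (G ⧸ N) →* (Y →ₗ[k] Y)ˣ)
    (τ : G →* ((Q ⊗[k] Y) →ₗ[k] (Q ⊗[k] Y))ˣ)
    (hτN : ∀ (n : ↥N) (q : Q) (y : Y), (τ ↑n).1 (q ⊗ₜ[k] y) = ((ρ n).1 q) ⊗ₜ[k] y)
    (hW : ∀ g : G, ∀ x ∈ LinearMap.range
        (TensorProduct.map V.subtype (LinearMap.id (R := k) (M := Y))),
      (τ g).1 x ∈ LinearMap.range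
        (TensorProduct.map V.subtype (LinearMap.id (R := k) (M := Y))))
    (hτV : ∀ (g : G) (v : ↥V) (y : Y),
      (τ g).1 ((v : Q) ⊗ₜ[k] y) = (((β g).1 v : Q)) ⊗ₜ[k] ((σ (g : G ⧸ N)).1 y)) :
    ∃ π : G →* ((Q × (Fin (Module.finrank k Y * Module.finrank k Y - 1) → Q)) →ₗ[k]
        (Q × (Fin (Module.finrank k Y * Module.finrank k Y - 1) → Q)))ˣ,
      (∀ (n : ↥N) (p : Q × (Fin (Module.finrank k Y * Module.finrank k Y - 1) → Q)),
        (π ↑n).1 p = ((ρ n).1 p.1, fun i => (ρ n).1 (p.2 i))) ∧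
      (∀ (g : G) (v : ↥V), (π g).1 ((v : Q), 0) = (((β g).1 v : Q), 0)) :=
  tensor_stable_pair_numerically_stable_general N ρ V β Y σ τ hτN hτV
end

section
/- Let N ⊴ G and let (κ,γ) be a Schreier system for (G,U) that is inflated from a Schreier system (κ',γ') for (G/N,U), i.e., κ(g,u) = κ'(ḡ,u) and γ(g,h) = γ'(ḡ,h̄). Then in the extension group G^◇ the map ι : N → G^◇, n ↦ (1,n), is an injective group homomorphism, its image ι(N) commutes elementwise with U × {1}, ι(N) is a normal subgroup of G^◇, and π⁻¹(N) is isomorphic to the direct product U × N. -/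
/-- Type synonym for the underlying set `U × G` of the Schreier extension. -/
def SchreierExt (U G : Type*) : Type _ := U × G

/-- Build an element of the Schreier extension from its components. -/
def SchreierExt.mk {U G : Type*} (u : U) (g : G) : SchreierExt U G := (u, g)

/-- The `U`-component. -/
def SchreierExt.u {U G : Type*} (x : SchreierExt U G) : U := Prod.fst x

/-- The `G`-component. -/
def SchreierExt.g {U G : Type*} (x : SchreierExt U G) : G := Prod.snd x

/-!
Because `κ` and `γ` only see the cosets modulo `N`, on elements of `N` they agree with their
values at `1`: `κ n = id` and `γ n g = γ g n = 1`, these last by the normalisation of the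
cocycle. Hence multiplication on `π⁻¹(N) = U × N` is componentwise, and `(1,n)` commutes with
`(u,1)`. Conjugating `(1,n)` by `(v,g)` just conjugates `n` by `g`: from
`(v,g)(1,n) = (v, gn) = (1, gng⁻¹)(v,g)` and normality of `N`.
-/

namespace SchreierSystem

variable {G U : Type*}

theorem action_one_right [Group U] {κ : G → U → U}
    (hκmul : ∀ (g : G) (u v : U), κ g (u * v) = κ g u * κ g v) (g : G) :
    κ g 1 = 1 :=
  left_eq_mul.mp (by simpa only [one_mul] using hκmul g 1 1)

variable [Group G]

theorem action_of_mem {κ : G → U → U} (hκ1 : ∀ u : U, κ 1 u = u) {N : Subgroup G}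
    (hκinf : ∀ (g : G) (n : ↥N) (u : U), κ (g * ↑n) u = κ g u) {n : G} (hn : n ∈ N) (u : U) :
    κ n u = u := by
  simpa [hκ1] using hκinf 1 ⟨n, hn⟩ u

variable [Group U] {κ : G → U → U} {γ : G → G → U}

theorem cocycle_one_left (hκ1 : ∀ u : U, κ 1 u = u)
    (hcoc : ∀ f g h : G, κ f (γ g h) * γ f (g * h) = γ f g * γ (f * g) h)
    (hnorm : γ 1 1 = 1) (h : G) : γ 1 h = 1 :=
  (mul_eq_left (a := γ 1 h)).mp (by simpa [hκ1, hnorm] using hcoc 1 1 h)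

theorem cocycle_one_right (hκmul : ∀ (g : G) (u v : U), κ g (u * v) = κ g u * κ g v)
    (hcoc : ∀ f g h : G, κ f (γ g h) * γ f (g * h) = γ f g * γ (f * g) h)
    (hnorm : γ 1 1 = 1) (g : G) : γ g 1 = 1 :=
  (mul_eq_left (a := γ g 1)).mp
    (by simpa [hnorm, action_one_right hκmul] using (hcoc g 1 1).symm)

variable {N : Subgroup G}

theorem cocycle_of_mem_left (hκ1 : ∀ u : U, κ 1 u = u)
    (hcoc : ∀ f g h : G, κ f (γ g h) * γ f (g * h) = γ f g * γ (f * g) h)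
    (hnorm : γ 1 1 = 1) (hγinf : ∀ (g h : G) (n m : ↥N), γ (g * ↑n) (h * ↑m) = γ g h)
    {n : G} (hn : n ∈ N) (g : G) : γ n g = 1 := by
  simpa [cocycle_one_left hκ1 hcoc hnorm] using hγinf 1 g ⟨n, hn⟩ 1

theorem cocycle_of_mem_right (hκmul : ∀ (g : G) (u v : U), κ g (u * v) = κ g u * κ g v)
    (hcoc : ∀ f g h : G, κ f (γ g h) * γ f (g * h) = γ f g * γ (f * g) h)
    (hnorm : γ 1 1 = 1) (hγinf : ∀ (g h : G) (n m : ↥N), γ (g * ↑n) (h * ↑m) = γ g h)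
    (g : G) {n : G} (hn : n ∈ N) : γ g n = 1 := by
  simpa [cocycle_one_right hκmul hcoc hnorm] using hγinf g 1 1 ⟨n, hn⟩

end SchreierSystem

namespace SchreierExt

variable {G U : Type*}

theorem mk_inj {u v : U} {g h : G} : mk u g = mk v h ↔ u = v ∧ g = h :=
  Prod.mk_inj

theorem range_mk_subgroup [Group G] (N : Subgroup G) :
    Set.range (fun p : U × ↥N => mk p.1 (↑p.2 : G)) =
      {x : SchreierExt U G | x.g ∈ N} := by
  ext x
  constructor
  · rintro ⟨⟨u, n⟩, rfl⟩
    exact n.2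
  · intro hx
    exact ⟨(x.u, ⟨x.g, hx⟩), rfl⟩

variable [Group G] [Group U] {κ : G → U → U} {γ : G → G → U} [Group (SchreierExt U G)]

theorem mk_mul_mk_of_trivial (hmul : ∀ x y : SchreierExt U G,
      x * y = mk (x.u * κ x.g y.u * γ x.g y.g) (x.g * y.g))
    {u v : U} {g h : G} (hκ : κ g v = v) (hγ : γ g h = 1) :
    mk u g * mk v h = mk (u * v) (g * h) := by
  rw [hmul]
  change mk (u * κ g v * γ g h) (g * h) = _
  rw [hκ, hγ, mul_one]

theorem conj_mk_one (hmul : ∀ x y : SchreierExt U G,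
      x * y = mk (x.u * κ x.g y.u * γ x.g y.g) (x.g * y.g))
    {v : U} {g n : G} (hκg : κ g 1 = 1) (hγg : γ g n = 1)
    (hκconj : κ (g * n * g⁻¹) v = v) (hγconj : γ (g * n * g⁻¹) g = 1) :
    mk v g * mk 1 n * (mk v g)⁻¹ =
      mk 1 (g * n * g⁻¹) := by
  have hcomm : mk v g * mk 1 n =
      mk 1 (g * n * g⁻¹) * mk v g := by
    rw [mk_mul_mk_of_trivial hmul hκg hγg, mk_mul_mk_of_trivial hmul hκconj hγconj]
    simp
  rw [hcomm, mul_inv_cancel_right]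

end SchreierExt

theorem inflated_schreier_normal_subgroup_general {G U : Type*} [Group G] [Group U]
    (N : Subgroup G) (hN : N.Normal)
    (κ : G → U → U) (γ : G → G → U)
    (hκ1 : ∀ u : U, κ 1 u = u)
    (hκmul : ∀ (g : G) (u v : U), κ g (u * v) = κ g u * κ g v)
    (hcoc : ∀ f g h : G, κ f (γ g h) * γ f (g * h) = γ f g * γ (f * g) h)
    (hnorm : γ 1 1 = 1)
    (hκinf : ∀ (g : G) (n : ↥N) (u : U), κ (g * ↑n) u = κ g u)
    (hγinf : ∀ (g h : G) (n m : ↥N), γ (g * ↑n) (h * ↑m) = γ g h)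
    (inst : Group (SchreierExt U G))
    (hmul : ∀ x y : SchreierExt U G,
      x * y = SchreierExt.mk (x.u * κ x.g y.u * γ x.g y.g) (x.g * y.g)) :
    (∀ n m : ↥N, SchreierExt.mk (1 : U) ((↑(n * m) : G)) =
      SchreierExt.mk (1 : U) (↑n : G) * SchreierExt.mk (1 : U) (↑m : G)) ∧
    Function.Injective (fun n : ↥N => SchreierExt.mk (1 : U) (↑n : G)) ∧
    (∀ (u : U) (n : ↥N),
      SchreierExt.mk u (1 : G) * SchreierExt.mk (1 : U) (↑n : G) =
        SchreierExt.mk (1 : U) (↑n : G) * SchreierExt.mk u (1 : G)) ∧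
    (∀ (x : SchreierExt U G) (n : ↥N), ∃ m : ↥N,
      x * SchreierExt.mk (1 : U) (↑n : G) * x⁻¹ = SchreierExt.mk (1 : U) (↑m : G)) ∧
    (∀ p q : U × ↥N,
      SchreierExt.mk (p.1 * q.1) ((↑(p.2 * q.2) : G)) =
        SchreierExt.mk p.1 (↑p.2 : G) * SchreierExt.mk q.1 (↑q.2 : G)) ∧
    Function.Injective (fun p : U × ↥N => SchreierExt.mk p.1 (↑p.2 : G)) ∧
    Set.range (fun p : U × ↥N => SchreierExt.mk p.1 (↑p.2 : G)) =
      {x : SchreierExt U G | x.g ∈ N} := by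
  open SchreierSystem SchreierExt in
  have hmulN : ∀ (u v : U) (n m : ↥N),
      mk u (↑n : G) * mk v (↑m : G) = mk (u * v) (↑(n * m) : G) :=
    fun u v n m => mk_mul_mk_of_trivial hmul (action_of_mem hκ1 hκinf n.2 v)
      (cocycle_of_mem_right hκmul hcoc hnorm hγinf _ m.2)
  refine ⟨fun n m => by rw [hmulN, one_mul], fun n m h => Subtype.ext (mk_inj.mp h).2, ?_, ?_,
    fun p q => (hmulN _ _ _ _).symm,
    fun p q h => Prod.ext (mk_inj.mp h).1 (Subtype.ext (mk_inj.mp h).2), range_mk_subgroup N⟩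
  · intro u n
    rw [show (1 : G) = ((1 : ↥N) : G) from rfl, hmulN, hmulN]
    simp only [mul_one, one_mul]
  · rintro ⟨v, g⟩ n
    have hconj : g * n * g⁻¹ ∈ N := hN.conj_mem _ n.2 g
    exact ⟨⟨_, hconj⟩, conj_mk_one hmul (action_one_right hκmul g)
      (cocycle_of_mem_right hκmul hcoc hnorm hγinf g n.2) (action_of_mem hκ1 hκinf hconj v)
      (cocycle_of_mem_left hκ1 hcoc hnorm hγinf hconj g)⟩

/-- if the Schreier system `(κ,γ)` for `(G,U)` is inflated from `G/N`, then in
the extension group `G^◇` the map `ι : n ↦ (1,n)` is an injective homomorphism on `N`, its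
image commutes elementwise with `U × {1}`, `ι(N)` is normal in `G^◇`, and `π⁻¹(N)` is
isomorphic to the direct product `U × N` (via `(u,n) ↦ (u,n)`). -/
theorem inflated_schreier_normal_subgroup {G U : Type*} [Group G] [Group U]
    (N : Subgroup G) (hN : N.Normal)
    (κ : G → U → U) (γ : G → G → U)
    (hκ1 : ∀ u : U, κ 1 u = u)
    (hκmul : ∀ (g : G) (u v : U), κ g (u * v) = κ g u * κ g v)
    (hconj : ∀ (g h : G) (u : U), κ g (κ h u) = γ g h * κ (g * h) u * (γ g h)⁻¹)
    (hcoc : ∀ f g h : G, κ f (γ g h) * γ f (g * h) = γ f g * γ (f * g) h)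
    (hnorm : γ 1 1 = 1)
    (hκinf : ∀ (g : G) (n : ↥N) (u : U), κ (g * ↑n) u = κ g u)
    (hγinf : ∀ (g h : G) (n m : ↥N), γ (g * ↑n) (h * ↑m) = γ g h)
    (inst : Group (SchreierExt U G))
    (hmul : ∀ x y : SchreierExt U G,
      x * y = SchreierExt.mk (x.u * κ x.g y.u * γ x.g y.g) (x.g * y.g)) :
    (∀ n m : ↥N, SchreierExt.mk (1 : U) ((↑(n * m) : G)) =
      SchreierExt.mk (1 : U) (↑n : G) * SchreierExt.mk (1 : U) (↑m : G)) ∧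
    Function.Injective (fun n : ↥N => SchreierExt.mk (1 : U) (↑n : G)) ∧
    (∀ (u : U) (n : ↥N),
      SchreierExt.mk u (1 : G) * SchreierExt.mk (1 : U) (↑n : G) =
        SchreierExt.mk (1 : U) (↑n : G) * SchreierExt.mk u (1 : G)) ∧
    (∀ (x : SchreierExt U G) (n : ↥N), ∃ m : ↥N,
      x * SchreierExt.mk (1 : U) (↑n : G) * x⁻¹ = SchreierExt.mk (1 : U) (↑m : G)) ∧
    (∀ p q : U × ↥N,
      SchreierExt.mk (p.1 * q.1) ((↑(p.2 * q.2) : G)) =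
        SchreierExt.mk p.1 (↑p.2 : G) * SchreierExt.mk q.1 (↑q.2 : G)) ∧
    Function.Injective (fun p : U × ↥N => SchreierExt.mk p.1 (↑p.2 : G)) ∧
    Set.range (fun p : U × ↥N => SchreierExt.mk p.1 (↑p.2 : G)) =
      {x : SchreierExt U G | x.g ∈ N} :=
  inflated_schreier_normal_subgroup_general N hN κ γ hκ1 hκmul hcoc hnorm hκinf hγinf inst hmul
end

section
/- Let N ⊴ G abstract groups, Q a finite dimensional kN-module, and suppose there is a kG-module M with M|_N ≅ Q ⊕ R for some kN-module R, together with a kG-submodule V of M contained in Q and containing soc^N Q. Define α : G → End_k(Q) by α(g)(v) = σ(g·v) where σ : M → Q is the projection along R. Then each α(g) is invertible, and α satisfies: α(1) = 1_Q, α(g)ρ(n)α(g)⁻¹ = ρ(gng⁻¹), α(gn) = α(g)ρ(n), and α(g)v = g·v for v ∈ V. In particular (Q,V) is strongly G-stable. -/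
/-! Since `Q` and `R` are `N`-stable, the projection onto `Q` along `R` commutes with the action
of `N`; this gives `α(gn) = α(g)ρ(n)` and `α(ng) = ρ(n)α(g)`, hence the conjugation rule. The
conjugation rule makes `ker α(g)` an `N`-submodule of `Q`, so if it were nonzero it would meet
`soc^N Q ⊆ V`. But on `V` the map `α(g)` is `v ↦ g·v`, which is injective. Thus `α(g)` is
injective, hence bijective because `Q` is finite-dimensional. -/

/-- A subspace `W` of the `kG`-module `M` is `N`-stable if it is preserved by the action of
every element of the subgroup `N`. -/
def NStable {k : Type*} [Field k] {M : Type*} [AddCommGroup M] [Module k M]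
    {G : Type*} [Group G] (N : Subgroup G) (π : G →* (M →ₗ[k] M)ˣ)
    (W : Submodule k M) : Prop :=
  ∀ n : ↥N, ∀ x ∈ W, (π ↑n).1 x ∈ W

/-- The `N`-socle of an `N`-stable subspace `Q` of `M`: the sum of all simple `N`-submodules
of `Q`. -/
noncomputable def socN {k : Type*} [Field k] {M : Type*} [AddCommGroup M] [Module k M]
    {G : Type*} [Group G] (N : Subgroup G) (π : G →* (M →ₗ[k] M)ˣ)
    (Q : Submodule k M) : Submodule k M :=
  sSup {W : Submodule k M | W ≤ Q ∧ NStable N π W ∧ ⊥ < W ∧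
    ∀ T : Submodule k M, NStable N π T → T ≤ W → T = ⊥ ∨ T = W}

namespace Submodule

variable {R E : Type*} [Ring R] [AddCommGroup E] [Module R E] {p q : Submodule R E}

theorem projectionOnto_apply_of_mapsTo (hpq : IsCompl p q) {T : E →ₗ[R] E}
    (hp : ∀ x ∈ p, T x ∈ p) (hq : ∀ x ∈ q, T x ∈ q) (x : E) :
    (p.projectionOnto q hpq (T x) : E) = T (p.projectionOnto q hpq x) := by
  have hcomm : Commute (p.projection q hpq) T :=
    (LinearMap.IsIdempotentElem.commute_iff (isIdempotentElem_projection hpq)).2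
      ⟨by rwa [range_projection, Module.End.mem_invtSubmodule],
        by rwa [ker_projection, Module.End.mem_invtSubmodule]⟩
  exact LinearMap.congr_fun hcomm.eq x

noncomputable def compression (hpq : IsCompl p q) (T : E →ₗ[R] E) : p →ₗ[R] p :=
  p.projectionOnto q hpq ∘ₗ T ∘ₗ p.subtype

theorem compression_apply_of_mem (hpq : IsCompl p q) {T : E →ₗ[R] E} {x : p} (hx : T x ∈ p) :
    (compression hpq T x : E) = T x :=
  congrArg Subtype.val (projectionOnto_apply_of_mem_left hpq hx)

theorem compression_id (hpq : IsCompl p q) : compression hpq LinearMap.id = LinearMap.id :=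
  LinearMap.ext fun x => Subtype.ext (compression_apply_of_mem hpq x.2)

theorem compression_comp_eq_comp_restrict (hpq : IsCompl p q) (T : E →ₗ[R] E) {S : E →ₗ[R] E}
    (hS : ∀ x ∈ p, S x ∈ p) :
    compression hpq (T ∘ₗ S) = compression hpq T ∘ₗ S.restrict hS :=
  rfl

theorem compression_comp_eq_restrict_comp (hpq : IsCompl p q) {S : E →ₗ[R] E} (T : E →ₗ[R] E)
    (hp : ∀ x ∈ p, S x ∈ p) (hq : ∀ x ∈ q, S x ∈ q) :
    compression hpq (S ∘ₗ T) = S.restrict hp ∘ₗ compression hpq T :=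
  LinearMap.ext fun x => Subtype.ext (projectionOnto_apply_of_mapsTo hpq hp hq (T x))

end Submodule

section Socle

variable {k M G : Type*} [Field k] [AddCommGroup M] [Module k M] [Group G]
  {N : Subgroup G} {π : G →* (M →ₗ[k] M)ˣ}

theorem NStable.eq_bot_of_disjoint_socN {Q K : Submodule k M} [FiniteDimensional k Q]
    (hK : NStable N π K) (hKQ : K ≤ Q) (hdisj : Disjoint K (socN N π Q)) : K = ⊥ := by
  by_contra hne
  let S : Set (Submodule k M) := {W | W ≤ K ∧ NStable N π W ∧ W ≠ ⊥}
  obtain ⟨W, ⟨hWK, hW, hWne⟩, hWmin⟩ :=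
    (measure fun W : Submodule k M => Module.finrank k W).wf.has_min S ⟨K, le_rfl, hK, hne⟩
  have : FiniteDimensional k W := Submodule.finiteDimensional_of_le (hWK.trans hKQ)
  have hWsimple : ∀ T : Submodule k M, NStable N π T → T ≤ W → T = ⊥ ∨ T = W := by
    refine fun T hT hTW => or_iff_not_imp_left.2 fun hTne => ?_
    by_contra hTW'
    exact hWmin T ⟨hTW.trans hWK, hT, hTne⟩
      (Submodule.finrank_lt_finrank_of_lt (lt_of_le_of_ne hTW hTW'))
  have hWsoc : W ≤ socN N π Q :=
    le_sSup ⟨hWK.trans hKQ, hW, bot_lt_iff_ne_bot.2 hWne, hWsimple⟩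
  exact hWne (eq_bot_iff.2 fun w hw => hdisj.le_bot ⟨hWK hw, hWsoc hw⟩)

end Socle

section Compression

variable {k M G : Type*} [Field k] [AddCommGroup M] [Module k M] [Group G]
  {N : Subgroup G} {π : G →* (M →ₗ[k] M)ˣ} {Q R : Submodule k M} (hcompl : IsCompl Q R)

theorem compression_mul_right (hQ : NStable N π Q) (g : G) (n : N) :
    Submodule.compression hcompl (π (g * n)).1 =
      Submodule.compression hcompl (π g).1 ∘ₗ (π n).1.restrict (hQ n) := by
  rw [map_mul, Units.val_mul, Module.End.mul_eq_comp]
  exact Submodule.compression_comp_eq_comp_restrict hcompl _ (hQ n)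

theorem compression_mul_left (hQ : NStable N π Q) (hR : NStable N π R) (n : N) (g : G) :
    Submodule.compression hcompl (π (n * g)).1 =
      (π n).1.restrict (hQ n) ∘ₗ Submodule.compression hcompl (π g).1 := by
  rw [map_mul, Units.val_mul, Module.End.mul_eq_comp]
  exact Submodule.compression_comp_eq_restrict_comp hcompl _ (hQ n) (hR n)

theorem compression_comp_restrict (hN : N.Normal) (hQ : NStable N π Q) (hR : NStable N π R)
    (g : G) (n : N) :
    Submodule.compression hcompl (π g).1 ∘ₗ (π n).1.restrict (hQ n) =
      (π (g * n * g⁻¹)).1.restrict (hQ ⟨_, hN.conj_mem n n.2 g⟩) ∘ₗ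
        Submodule.compression hcompl (π g).1 := by
  rw [← compression_mul_right, ← compression_mul_left hcompl hQ hR ⟨_, hN.conj_mem n n.2 g⟩]
  congr 2
  group

theorem injective_compression [FiniteDimensional k Q] (hN : N.Normal) (hQ : NStable N π Q)
    (hR : NStable N π R) {g : G} (hsoc : ∀ x ∈ socN N π Q, (π g).1 x ∈ Q) :
    Function.Injective (Submodule.compression hcompl (π g).1) := by
  set K := (LinearMap.ker (Submodule.compression hcompl (π g).1)).map Q.subtype
  have hK : NStable N π K := by
    rintro n _ ⟨x, hx, rfl⟩
    refine ⟨(π n).1.restrict (hQ n) x, LinearMap.mem_ker.2 ?_, rfl⟩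
    rw [← LinearMap.comp_apply, compression_comp_restrict hcompl hN hQ hR,
      LinearMap.comp_apply, LinearMap.mem_ker.1 hx, map_zero]
  have hdisj : Disjoint K (socN N π Q) := by
    rw [Submodule.disjoint_def]
    rintro _ ⟨x, hx, rfl⟩ hxsoc
    have hgx : (π g).1 x = 0 := by
      rw [← Submodule.compression_apply_of_mem hcompl (hsoc x hxsoc), LinearMap.mem_ker.1 hx,
        Submodule.coe_zero]
    exact ((Module.End.isUnit_iff _).1 (π g).isUnit).injective (hgx.trans (map_zero _).symm)
  have hK0 : K = ⊥ := hK.eq_bot_of_disjoint_socN (Submodule.map_subtype_le Q _) hdisj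
  rw [← LinearMap.ker_eq_bot]
  exact Submodule.map_injective_of_injective Q.injective_subtype
    (hK0.trans (Submodule.map_bot _).symm)

end Compression

/-- if `M` is a `kG`-module with `M|_N = Q ⊕ R` as `N`-modules, and `V` is a
`kG`-submodule of `M` with `soc^N Q ≤ V ≤ Q`, then `α(g) := σ ∘ (g·)` (σ the projection onto
`Q` along `R`) consists of invertible maps and exhibits `(Q,V)` as a strongly `G`-stable pair:
`α(1) = 1`, `α(g)ρ(n) = ρ(gng⁻¹)α(g)`, `α(gn) = α(g)ρ(n)` and `α(g)v = g·v` for `v ∈ V`. -/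
theorem strongly_stable_of_direct_summand
    {k : Type*} [Field k] {M : Type*} [AddCommGroup M] [Module k M]
    {G : Type*} [Group G] (N : Subgroup G) (hN : N.Normal)
    (π : G →* (M →ₗ[k] M)ˣ)
    (Q R : Submodule k M) [FiniteDimensional k ↥Q]
    (hcompl : IsCompl Q R)
    (hQ : NStable N π Q) (hR : NStable N π R)
    (V : Submodule k M) (hVQ : V ≤ Q)
    (hVG : ∀ g : G, ∀ x ∈ V, (π g).1 x ∈ V)
    (hsoc : socN N π Q ≤ V) :
    let proj : M →ₗ[k] ↥Q := Q.linearProjOfIsCompl R hcompl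
    let alpha : G → (↥Q →ₗ[k] ↥Q) := fun g => proj ∘ₗ ((π g).1 ∘ₗ Q.subtype)
    let rhoN : ↥N → (↥Q →ₗ[k] ↥Q) := fun n => ((π ↑n).1).restrict (hQ n)
    (∀ g : G, Function.Bijective (alpha g)) ∧
    alpha 1 = LinearMap.id ∧
    (∀ (g : G) (n : ↥N),
      alpha g ∘ₗ rhoN n = rhoN ⟨g * ↑n * g⁻¹, hN.conj_mem ↑n n.2 g⟩ ∘ₗ alpha g) ∧
    (∀ (g : G) (n : ↥N), alpha (g * ↑n) = alpha g ∘ₗ rhoN n) ∧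
    (∀ (g : G) (v : ↥Q), (v : M) ∈ V → ((alpha g v : ↥Q) : M) = (π g).1 ↑v) := by
  intro proj alpha rhoN
  refine ⟨fun g => ?_, ?_, compression_comp_restrict hcompl hN hQ hR,
    compression_mul_right hcompl hQ, fun g v hv => ?_⟩
  · have hinj : Function.Injective (alpha g) :=
      injective_compression hcompl hN hQ hR fun x hx => hVQ (hVG g x (hsoc hx))
    exact ⟨hinj, LinearMap.injective_iff_surjective.1 hinj⟩
  · show Submodule.compression hcompl (π 1).1 = _
    rw [map_one]
    exact Submodule.compression_id hcompl
  · exact Submodule.compression_apply_of_mem hcompl (hVQ (hVG g _ hv))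
end
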